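/- Let G be a connected simple graph on vertices {0,...,n} with root r, and let DFS(G) be the depth-first search spanning tree of G rooted at r (visiting neighbors in decreasing numerical order). Then the number of κ-inversions of DFS(G) equals g = |E| - |V| + 1, the circuit rank of G. -/

import Mathlib

/-!
Depth-first search that scans neighbours in decreasing order produces a spanning tree which is
normal (every edge of `G` joins a vertex to one of its ancestors) and greedy: if `c` is a child
of `a` and `b` a descendant of `c` adjacent to `a`, then `b < c`, for otherwise the scan at `a`
would have reached `b` before `c`. In such a tree every pair `(i, j)` with `i ≠ r` an ancestor of
`j` and `parent i ~ j` is automatically an inversion, and `(i, j) ↦ {parent i, j}` is a bijection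
from the κ-inversions onto the non-tree edges: the non-tree edge `{a, b}` with `a` above `b` comes
from `(c, b)` for the child `c` of `a` on the path to `b`. So κ = |E| - n.

Normality and greediness of the search are proved through an invariant, `DfsSpec`, describing the
effect of one call on the visited set and the parent map.
-/

open Finset

namespace PFG

variable {n : ℕ}

/-- `deg_{Sᶜ}(i)`: the number of edges `{i,j}` of `G` with `j ∉ S`. -/
noncomputable def sDeg (G : SimpleGraph (Fin (n+1))) (S : Finset (Fin (n+1))) (i : Fin (n+1)) : ℕ :=
  Set.ncard {j : Fin (n+1) | G.Adj i j ∧ j ∉ S}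

/-- `P` is a parking function for `G` with respect to the root `r`:
for every nonempty `S ⊆ V \ {r}` there is `i ∈ S` with `P i < deg_{Sᶜ}(i)`. -/
def IsParkingFunction (G : SimpleGraph (Fin (n+1))) (r : Fin (n+1))
    (P : Fin (n+1) → ℕ) : Prop :=
  ∀ S : Finset (Fin (n+1)), S.Nonempty → r ∉ S → ∃ i ∈ S, P i < sDeg G S i

/-- The degree of a parking function: the sum of its values over non-root vertices. -/
def degPF (r : Fin (n+1)) (P : Fin (n+1) → ℕ) : ℕ := ∑ v ∈ univ.erase r, P v

/-- A spanning tree of `G` rooted at `r`, encoded by its parent function: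
each non-root vertex is adjacent (in `G`) to its parent, and iterating
the parent map from any vertex reaches the root. -/
structure RootedSpanningTree (G : SimpleGraph (Fin (n+1))) (r : Fin (n+1)) where
  parent : Fin (n+1) → Fin (n+1)
  parent_root : parent r = r
  adj_parent : ∀ v, v ≠ r → G.Adj (parent v) v
  reaches_root : ∀ v, ∃ k, parent^[k] v = r

/-- `i` is a (proper) ancestor of `j` in the rooted tree with parent map `par`. -/
def IsAncestor (par : Fin (n+1) → Fin (n+1)) (i j : Fin (n+1)) : Prop :=
  ∃ k, 0 < k ∧ par^[k] j = i

/-- An inversion: `i` is an ancestor of `j` and `i > j`. -/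
def IsInversion (par : Fin (n+1) → Fin (n+1)) (i j : Fin (n+1)) : Prop :=
  IsAncestor par i j ∧ j < i

/-- A κ-inversion: an inversion `(i,j)` such that moreover `i` is not the
root and the parent of `i` is adjacent to `j` in `G`. -/
def IsKappaInversion (G : SimpleGraph (Fin (n+1))) (r : Fin (n+1))
    (par : Fin (n+1) → Fin (n+1)) (i j : Fin (n+1)) : Prop :=
  IsAncestor par i j ∧ j < i ∧ i ≠ r ∧ G.Adj (par i) j

/-- the κ-number: the number of κ-inversions. -/
noncomputable def kappaNum (G : SimpleGraph (Fin (n+1))) (r : Fin (n+1))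
    (par : Fin (n+1) → Fin (n+1)) : ℕ :=
  Set.ncard {p : Fin (n+1) × Fin (n+1) | IsKappaInversion G r par p.1 p.2}

/-- the number of inversions. -/
noncomputable def invNum (par : Fin (n+1) → Fin (n+1)) : ℕ :=
  Set.ncard {p : Fin (n+1) × Fin (n+1) | IsInversion par p.1 p.2}

open Classical in
/-- The neighbors of `i` in `G`, listed in decreasing order. -/
noncomputable def nbrs (G : SimpleGraph (Fin (n+1))) (i : Fin (n+1)) : List (Fin (n+1)) :=
  ((univ.filter (fun j => G.Adj i j)).sort (· ≤ ·)).reverse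

/-- One step of depth-first search from vertex `i`: scan the neighbors of `i`
in decreasing order; each unvisited neighbor `j` is visited, gets parent `i`,
and the search recurses from `j`.  The state is the pair
(visited vertices, parent map). -/
noncomputable def dfsStep (G : SimpleGraph (Fin (n+1))) :
    ℕ → Fin (n+1) → Finset (Fin (n+1)) × (Fin (n+1) → Fin (n+1)) →
      Finset (Fin (n+1)) × (Fin (n+1) → Fin (n+1))
  | 0, _, st => st
  | (fuel+1), i, st =>
      (nbrs G i).foldl
        (fun st j =>
          if j ∈ st.1 then st
          else dfsStep G fuel j (insert j st.1, Function.update st.2 j i)) st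

/-- The parent map of the depth-first search tree of `G` rooted at `r`,
visiting neighbors in decreasing numerical order. -/
noncomputable def dfsParent (G : SimpleGraph (Fin (n+1))) (r : Fin (n+1)) :
    Fin (n+1) → Fin (n+1) :=
  (dfsStep G (n+1) r ({r}, fun _ => r)).2

/-- The set of edges of the rooted tree given by parent map `par`. -/
def treeEdges (r : Fin (n+1)) (par : Fin (n+1) → Fin (n+1)) : Set (Sym2 (Fin (n+1))) :=
  {e | ∃ v, v ≠ r ∧ e = s(par v, v)}

open Set

section Ancestor

variable {f g : Fin (n+1) → Fin (n+1)} {a b c : Fin (n+1)}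

theorem isAncestor_apply (f : Fin (n+1) → Fin (n+1)) (v : Fin (n+1)) : IsAncestor f (f v) v :=
  ⟨1, one_pos, rfl⟩

theorem IsAncestor.trans (hab : IsAncestor f a b) (hbc : IsAncestor f b c) : IsAncestor f a c := by
  obtain ⟨k, hk, rfl⟩ := hab
  obtain ⟨l, -, rfl⟩ := hbc
  exact ⟨k + l, by omega, Function.iterate_add_apply f k l c⟩

theorem IsAncestor.mem_of_mapsTo {S : Set (Fin (n+1))} (h : IsAncestor f a b)
    (hS : MapsTo f S S) (hb : f b ∈ S) : a ∈ S := by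
  obtain ⟨k, hk, rfl⟩ := h
  obtain ⟨k, rfl⟩ := Nat.exists_eq_add_of_lt hk
  rw [zero_add, Function.iterate_succ_apply]
  exact hS.iterate k hb

theorem iterate_eq_of_eqOn {S : Set (Fin (n+1))} (hfg : EqOn f g S) (hS : MapsTo f S S)
    {v : Fin (n+1)} (hv : v ∈ S) (k : ℕ) : f^[k] v = g^[k] v := by
  induction k with
  | zero => rfl
  | succ k ih =>
    rw [Function.iterate_succ_apply', Function.iterate_succ_apply', ← ih,
      hfg (hS.iterate k hv)]

theorem isAncestor_congr {S : Set (Fin (n+1))} (hfg : EqOn f g S) (hS : MapsTo f S S)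
    (hb : b ∈ S) : IsAncestor f a b ↔ IsAncestor g a b := by
  simp only [IsAncestor, iterate_eq_of_eqOn hfg hS hb]

end Ancestor


def kappaInversions (G : SimpleGraph (Fin (n+1))) (r : Fin (n+1))
    (par : Fin (n+1) → Fin (n+1)) : Set (Fin (n+1) × Fin (n+1)) :=
  {p | IsKappaInversion G r par p.1 p.2}

def kappaEdge (par : Fin (n+1) → Fin (n+1)) (p : Fin (n+1) × Fin (n+1)) : Sym2 (Fin (n+1)) :=
  s(par p.1, p.2)

def IsNormal (G : SimpleGraph (Fin (n+1))) (par : Fin (n+1) → Fin (n+1)) : Prop :=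
  ∀ a b, G.Adj a b → IsAncestor par a b ∨ IsAncestor par b a

/-- The order property of depth-first search scanning neighbours in decreasing order: when
`par c` chose `c`, every larger neighbour was already visited, so none lies below `c`. -/
def IsGreedy (G : SimpleGraph (Fin (n+1))) (r : Fin (n+1)) (par : Fin (n+1) → Fin (n+1)) : Prop :=
  ∀ b c, c ≠ r → IsAncestor par c b → G.Adj (par c) b → b < c

namespace RootedSpanningTree

variable {G : SimpleGraph (Fin (n+1))} {r : Fin (n+1)} (T : RootedSpanningTree G r)
  {a b c v : Fin (n+1)}

theorem iterate_parent_root (k : ℕ) : T.parent^[k] r = r :=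
  Function.iterate_fixed T.parent_root k

theorem eq_root_of_iterate_eq_self {k : ℕ} (hk : 0 < k) (h : T.parent^[k] v = v) : v = r := by
  obtain ⟨m, hm⟩ := T.reaches_root v
  have hper : Function.IsPeriodicPt T.parent (k * m) v := Function.IsPeriodicPt.mul_const h m
  calc v = T.parent^[k * m] v := hper.eq.symm
    _ = T.parent^[k * m - m] (T.parent^[m] v) := by
      rw [← Function.iterate_add_apply, Nat.sub_add_cancel (Nat.le_mul_of_pos_left m hk)]
    _ = r := by rw [hm, iterate_parent_root]

theorem ne_root_of_isAncestor (h : IsAncestor T.parent a b) (ha : a ≠ r) : b ≠ r := by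
  rintro rfl
  obtain ⟨k, -, hk⟩ := h
  exact ha (hk.symm.trans (T.iterate_parent_root k))

theorem ne_of_isAncestor (h : IsAncestor T.parent a b) (ha : a ≠ r) : a ≠ b := by
  rintro rfl
  obtain ⟨k, hk, hka⟩ := h
  exact ha (T.eq_root_of_iterate_eq_self hk hka)

theorem eq_root_of_isAncestor_of_isAncestor (hab : IsAncestor T.parent a b)
    (hba : IsAncestor T.parent b a) : b = r := by
  obtain ⟨k, hk, hka⟩ := hba.trans hab
  exact T.eq_root_of_iterate_eq_self hk hka

theorem iterate_eq_of_parent_eq {s t : ℕ} (hs : T.parent^[s] v ≠ r) (ht : T.parent^[t] v ≠ r)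
    (h : T.parent (T.parent^[s] v) = T.parent (T.parent^[t] v)) :
    T.parent^[s] v = T.parent^[t] v := by
  wlog hst : s < t generalizing s t
  · rcases (not_lt.mp hst).eq_or_lt with rfl | hts
    · rfl
    · exact (this ht hs h.symm hts).symm
  rw [← Function.iterate_succ_apply' T.parent s, ← Function.iterate_succ_apply' T.parent t] at h
  have hroot : T.parent^[s + 1] v = r := by
    refine T.eq_root_of_iterate_eq_self (k := t - s) (by omega) ?_
    rw [← Function.iterate_add_apply, show t - s + (s + 1) = t + 1 by omega, h]
  refine absurd ?_ ht
  rw [← Nat.sub_add_cancel hst, Function.iterate_add_apply, hroot, iterate_parent_root]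

theorem exists_child_of_isAncestor (h : IsAncestor T.parent a b) :
    T.parent b = a ∨ ∃ c, c ≠ r ∧ T.parent c = a ∧ IsAncestor T.parent c b := by
  obtain ⟨k, hk, hkb⟩ := h
  obtain ⟨k, rfl⟩ : ∃ m, k = m + 1 := ⟨k - 1, by omega⟩
  induction k generalizing b with
  | zero => exact Or.inl hkb
  | succ k ih =>
    rw [Function.iterate_succ_apply] at hkb
    rcases ih (by omega) hkb with hpar | ⟨c, hc, hca, hcb⟩
    · by_cases hb : T.parent b = r
      · left
        rw [← hpar, hb, T.parent_root]
      · exact Or.inr ⟨T.parent b, hb, hpar, isAncestor_apply _ b⟩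
    · exact Or.inr ⟨c, hc, hca, hcb.trans (isAncestor_apply T.parent b)⟩

theorem treeEdges_subset : treeEdges r T.parent ⊆ G.edgeSet := by
  rintro _ ⟨v, hv, rfl⟩
  exact T.adj_parent v hv

theorem ncard_treeEdges : (treeEdges r T.parent).ncard = n := by
  have himage : treeEdges r T.parent = (fun v => s(T.parent v, v)) '' {r}ᶜ := by
    ext e
    exact ⟨fun ⟨v, hv, he⟩ => ⟨v, hv, he.symm⟩, fun ⟨v, hv, he⟩ => ⟨v, hv, he.symm⟩⟩
  have hinj : InjOn (fun v => s(T.parent v, v)) {r}ᶜ := by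
    intro v hv w _ h
    rcases Sym2.eq_iff.mp h with ⟨-, h⟩ | ⟨h₁, h₂⟩
    · exact h
    · exact absurd (T.eq_root_of_iterate_eq_self (k := 2) two_pos (by simp [h₁, ← h₂])) hv
  rw [himage, hinj.ncard_image]
  exact ncard_compl_of_ncard_eq_add _ (by simp)

theorem mapsTo_kappaInversion :
    MapsTo (kappaEdge T.parent) (kappaInversions G r T.parent)
      (G.edgeSet \ treeEdges r T.parent) := by
  rintro ⟨i, j⟩ ⟨hij, -, hi, hadj⟩
  refine ⟨hadj, ?_⟩
  rintro ⟨v, hv, he⟩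
  dsimp only [kappaEdge] at hij hi he
  obtain ⟨k, hk, hkj⟩ := id hij
  rcases Sym2.eq_iff.mp he with ⟨hpar, rfl⟩ | ⟨rfl, hj⟩
  · -- `i` lies above `j` and has the same parent
    refine T.ne_of_isAncestor hij hi ?_
    have := T.iterate_eq_of_parent_eq (s := k) (t := 0) (by rwa [hkj]) hv (by rwa [hkj])
    rwa [hkj] at this
  · -- `j` is the grandparent of its ancestor `i`
    refine hi (T.eq_root_of_iterate_eq_self (k := k + 2) (by omega) ?_)
    calc T.parent^[k + 2] i = T.parent^[k] j := by rw [hj, Function.iterate_add_apply]; rfl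
      _ = i := hkj

theorem injOn_kappaInversion :
    InjOn (kappaEdge T.parent) (kappaInversions G r T.parent) := by
  rintro ⟨i, j⟩ ⟨⟨k, hk, hkj⟩, -, hi, hadj⟩ ⟨i', j'⟩ ⟨⟨k', hk', hkj'⟩, -, hi', -⟩ he
  dsimp only [kappaEdge] at hkj hi hadj hkj' hi' he
  rcases Sym2.eq_iff.mp he with ⟨hpar, rfl⟩ | ⟨h₁, h₂⟩
  · subst hkj hkj'
    rw [T.iterate_eq_of_parent_eq hi hi' hpar]
  · -- `j` and `j'` would be ancestors of each other, hence both the root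
    have hj'j : IsAncestor T.parent j' j :=
      ⟨k + 1, by omega, by rw [Function.iterate_succ_apply', hkj, h₁]⟩
    have hjj' : IsAncestor T.parent j j' :=
      ⟨k' + 1, by omega, by rw [Function.iterate_succ_apply', hkj', h₂]⟩
    rw [h₁, T.eq_root_of_isAncestor_of_isAncestor hj'j hjj',
      T.eq_root_of_isAncestor_of_isAncestor hjj' hj'j] at hadj
    exact absurd hadj (G.loopless.irrefl r)

theorem surjOn_kappaInversion (hnormal : IsNormal G T.parent) (hgreedy : IsGreedy G r T.parent) :
    SurjOn (kappaEdge T.parent) (kappaInversions G r T.parent)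
      (G.edgeSet \ treeEdges r T.parent) := by
  have key : ∀ a b, G.Adj a b → IsAncestor T.parent a b → s(a, b) ∉ treeEdges r T.parent →
      s(a, b) ∈ kappaEdge T.parent '' kappaInversions G r T.parent := by
    intro a b hab hanc hnt
    rcases T.exists_child_of_isAncestor hanc with hpar | ⟨c, hc, rfl, hcb⟩
    · refine absurd ⟨b, ?_, by rw [hpar]⟩ hnt
      rintro rfl
      obtain ⟨k, -, hk⟩ := hanc
      exact hab.ne (hk.symm.trans (T.iterate_parent_root k))
    · exact ⟨(c, b), ⟨hcb, hgreedy b c hc hcb hab, hc, hab⟩, rfl⟩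
  rintro e ⟨he, hnt⟩
  induction e using Sym2.ind with
  | _ a b =>
    rcases hnormal a b he with h | h
    · exact key a b he h hnt
    · rw [Sym2.eq_swap] at hnt ⊢
      exact key b a he.symm h hnt

theorem kappaNum_add_eq_ncard_edgeSet (hnormal : IsNormal G T.parent)
    (hgreedy : IsGreedy G r T.parent) : kappaNum G r T.parent + n = G.edgeSet.ncard := by
  rw [kappaNum, ← kappaInversions, ← T.injOn_kappaInversion.ncard_image,
    (T.surjOn_kappaInversion hnormal hgreedy).image_eq_of_mapsTo T.mapsTo_kappaInversion]
  calc _ = (G.edgeSet \ treeEdges r T.parent).ncard + (treeEdges r T.parent).ncard := by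
        rw [T.ncard_treeEdges]
    _ = G.edgeSet.ncard := ncard_sdiff_add_ncard_of_subset T.treeEdges_subset

end RootedSpanningTree

section SDiff

variable {α : Type*} [DecidableEq α] {s t u : Finset α} {v : α}

theorem mem_sdiff_or_mem_sdiff (hv : v ∈ u \ s) : v ∈ t \ s ∨ v ∈ u \ t := by
  rw [Finset.mem_sdiff] at hv
  by_cases hvt : v ∈ t
  · exact Or.inl (Finset.mem_sdiff.mpr ⟨hvt, hv.2⟩)
  · exact Or.inr (Finset.mem_sdiff.mpr ⟨hv.1, hvt⟩)

theorem eq_or_mem_sdiff_insert {j : α} (hv : v ∈ t \ s) : v = j ∨ v ∈ t \ insert j s := by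
  rw [Finset.mem_sdiff] at hv
  by_cases hvj : v = j
  · exact Or.inl hvj
  · exact Or.inr (Finset.mem_sdiff.mpr ⟨hv.1, by simp [hvj, hv.2]⟩)

end SDiff

abbrev DfsState (n : ℕ) := Finset (Fin (n+1)) × (Fin (n+1) → Fin (n+1))

noncomputable def dfsVisit (G : SimpleGraph (Fin (n+1))) (fuel : ℕ) (i : Fin (n+1))
    (st : DfsState n) (j : Fin (n+1)) : DfsState n :=
  if j ∈ st.1 then st else dfsStep G fuel j (insert j st.1, Function.update st.2 j i)

theorem dfsStep_succ (G : SimpleGraph (Fin (n+1))) (fuel : ℕ) (i : Fin (n+1)) (st : DfsState n) :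
    dfsStep G (fuel + 1) i st = (nbrs G i).foldl (dfsVisit G fuel i) st :=
  rfl

theorem mem_nbrs {G : SimpleGraph (Fin (n+1))} {i j : Fin (n+1)} : j ∈ nbrs G i ↔ G.Adj i j := by
  classical
  simp [nbrs]

theorem nbrs_pairwise_gt (G : SimpleGraph (Fin (n+1))) (i : Fin (n+1)) :
    (nbrs G i).Pairwise (· > ·) := by
  classical
  exact List.pairwise_reverse.mpr (Finset.sortedLT_sort _).pairwise

theorem mapsTo_update_insert {p : Fin (n+1) → Fin (n+1)} {S : Finset (Fin (n+1))} {i : Fin (n+1)}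
    (hi : i ∈ S) (hS : MapsTo p S S) (j : Fin (n+1)) :
    MapsTo (Function.update p j i) ↑(insert j S) ↑(insert j S) := by
  intro v hv
  by_cases hvj : v = j
  · subst hvj
    simp [hi]
  · rw [Function.update_of_ne hvj]
    exact mem_insert_of_mem (hS (by simpa [hvj] using hv))

/-- What one call of depth-first search from `i` achieves when it turns the state `s` into `s'`:
the newly visited vertices `s'.1 \ s.1` hang below `i` as a normal, greedy subtree whose
neighbourhood has been visited completely. -/
structure DfsSpec (G : SimpleGraph (Fin (n+1))) (i : Fin (n+1)) (s s' : DfsState n) : Prop where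
  subset : s.1 ⊆ s'.1
  parent_eq : ∀ v ∈ s.1, s'.2 v = s.2 v
  adj_parent : ∀ v ∈ s'.1 \ s.1, G.Adj (s'.2 v) v
  isAncestor : ∀ v ∈ s'.1 \ s.1, IsAncestor s'.2 i v
  adj_mem : ∀ v ∈ s'.1 \ s.1, ∀ b, G.Adj v b → b ∈ s'.1
  normal : ∀ a ∈ s'.1 \ s.1, ∀ b ∈ s'.1 \ s.1, G.Adj a b →
    IsAncestor s'.2 a b ∨ IsAncestor s'.2 b a
  greedy : ∀ b ∈ s'.1 \ s.1, ∀ c ∈ s'.1 \ s.1, b ≠ c → IsAncestor s'.2 c b →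
    G.Adj (s'.2 c) b → b < c

namespace DfsSpec

variable {G : SimpleGraph (Fin (n+1))} {i j : Fin (n+1)} {s s₁ s' : DfsState n}

theorem refl (G : SimpleGraph (Fin (n+1))) (i : Fin (n+1)) (s : DfsState n) : DfsSpec G i s s := by
  constructor <;> simp

theorem mapsTo_old (h : DfsSpec G i s s') (hs : MapsTo s.2 s.1 s.1) : MapsTo s'.2 s.1 s.1 := by
  intro v hv
  rw [h.parent_eq v hv]
  exact hs hv

theorem mapsTo (h : DfsSpec G i s s') (hs : MapsTo s.2 s.1 s.1) : MapsTo s'.2 s'.1 s'.1 := by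
  intro v hv
  by_cases hvs : v ∈ s.1
  · exact h.subset (h.mapsTo_old hs hvs)
  · have hnew : v ∈ s'.1 \ s.1 := Finset.mem_sdiff.mpr ⟨hv, hvs⟩
    exact h.adj_mem v hnew _ (h.adj_parent v hnew).symm

theorem isAncestor_iff (h : DfsSpec G i s s') (hs : MapsTo s.2 s.1 s.1) {a v : Fin (n+1)}
    (hv : v ∈ s.1) : IsAncestor s'.2 a v ↔ IsAncestor s.2 a v :=
  (isAncestor_congr (fun x hx => (h.parent_eq x hx).symm) hs hv).symm

theorem descend (hi : i ∈ s.1) (hs : MapsTo s.2 s.1 s.1) (hj : j ∉ s.1) (hij : G.Adj i j)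
    (hlarger : ∀ b, G.Adj i b → j < b → b ∈ s.1)
    (h : DfsSpec G j (insert j s.1, Function.update s.2 j i) s₁)
    (hj₁ : ∀ b, G.Adj j b → b ∈ s₁.1) : DfsSpec G i s s₁ := by
  have hparent_j : s₁.2 j = i := by
    rw [h.parent_eq j (mem_insert_self j s.1)]
    exact Function.update_self j i s.2
  have hparent_eq : ∀ v ∈ s.1, s₁.2 v = s.2 v := fun v hv => by
    rw [h.parent_eq v (mem_insert_of_mem hv)]
    exact Function.update_of_ne (ne_of_mem_of_not_mem hv hj) i s.2
  have hsplit : ∀ v ∈ s₁.1 \ s.1, v = j ∨ v ∈ s₁.1 \ insert j s.1 :=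
    fun v hv => eq_or_mem_sdiff_insert hv
  have hj_anc : IsAncestor s₁.2 i j := hparent_j ▸ isAncestor_apply s₁.2 j
  refine ⟨(Finset.subset_insert j s.1).trans h.subset, hparent_eq, ?_, ?_, ?_, ?_, ?_⟩
  · intro v hv
    rcases hsplit v hv with rfl | hv
    · exact hparent_j ▸ hij
    · exact h.adj_parent v hv
  · intro v hv
    rcases hsplit v hv with rfl | hv
    · exact hj_anc
    · exact hj_anc.trans (h.isAncestor v hv)
  · intro v hv
    rcases hsplit v hv with rfl | hv
    · exact hj₁
    · exact h.adj_mem v hv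
  · intro a ha b hb hab
    rcases hsplit a ha with rfl | ha <;> rcases hsplit b hb with rfl | hb
    · exact absurd hab (G.loopless.irrefl _)
    · exact Or.inl (h.isAncestor b hb)
    · exact Or.inr (h.isAncestor a ha)
    · exact h.normal a ha b hb hab
  · intro b hb c hc hbc hcb hadj
    rcases hsplit c hc with rfl | hc
    · rw [hparent_j] at hadj
      by_contra hcb'
      exact (Finset.mem_sdiff.mp hb).2 (hlarger b hadj (lt_of_le_of_ne (not_lt.mp hcb') hbc.symm))
    · rcases hsplit b hb with rfl | hb
      · -- the proper ancestors of `j` are `i` and its ancestors, all visited before `j`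
        have hold : MapsTo s₁.2 s.1 s.1 := fun v hv => hparent_eq v hv ▸ hs hv
        exact absurd (mem_insert_of_mem (hcb.mem_of_mapsTo hold (hparent_j ▸ hi)))
          (Finset.mem_sdiff.mp hc).2
      · exact h.greedy b hb c hc hbc hcb hadj

/-- The first phase is closed under adjacency, so no vertex of the second phase has a parent in
the first one. -/
theorem mapsTo_sdiff_union (h₁ : DfsSpec G i s s₁) (h₂ : DfsSpec G i s₁ s')
    (hs : MapsTo s.2 s.1 s.1) : MapsTo s'.2 ↑(s'.1 \ s₁.1 ∪ s.1) ↑(s'.1 \ s₁.1 ∪ s.1) := by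
  intro v hv
  rcases Finset.mem_union.mp hv with hv | hv
  · have hadj := h₂.adj_parent v hv
    by_cases hp₁ : s'.2 v ∈ s₁.1
    · refine Finset.mem_union_right _ (not_not.mp fun hp => ?_)
      exact (Finset.mem_sdiff.mp hv).2 (h₁.adj_mem _ (Finset.mem_sdiff.mpr ⟨hp₁, hp⟩) v hadj)
    · exact Finset.mem_union_left _ (Finset.mem_sdiff.mpr ⟨h₂.adj_mem v hv _ hadj.symm, hp₁⟩)
  · rw [h₂.parent_eq v (h₁.subset hv)]
    exact Finset.mem_union_right _ (h₁.mapsTo_old hs hv)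

theorem trans (h₁ : DfsSpec G i s s₁) (h₂ : DfsSpec G i s₁ s') (hs : MapsTo s.2 s.1 s.1) :
    DfsSpec G i s s' := by
  have hs₁ := h₁.mapsTo hs
  have hsplit : ∀ v ∈ s'.1 \ s.1, v ∈ s₁.1 \ s.1 ∨ v ∈ s'.1 \ s₁.1 :=
    fun v hv => mem_sdiff_or_mem_sdiff hv
  have hphase₂ := h₁.mapsTo_sdiff_union h₂ hs
  refine ⟨h₁.subset.trans h₂.subset, fun v hv => ?_, ?_, ?_, ?_, ?_, ?_⟩
  · rw [h₂.parent_eq v (h₁.subset hv), h₁.parent_eq v hv]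
  · intro v hv
    rcases hsplit v hv with hv | hv
    · rw [h₂.parent_eq v (Finset.mem_sdiff.mp hv).1]
      exact h₁.adj_parent v hv
    · exact h₂.adj_parent v hv
  · intro v hv
    rcases hsplit v hv with hv | hv
    · exact (h₂.isAncestor_iff hs₁ (Finset.mem_sdiff.mp hv).1).mpr (h₁.isAncestor v hv)
    · exact h₂.isAncestor v hv
  · intro v hv b hb
    rcases hsplit v hv with hv | hv
    · exact h₂.subset (h₁.adj_mem v hv b hb)
    · exact h₂.adj_mem v hv b hb
  · intro a ha b hb hab
    rcases hsplit a ha with ha | ha <;> rcases hsplit b hb with hb | hb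
    · simpa only [h₂.isAncestor_iff hs₁ (Finset.mem_sdiff.mp ha).1,
        h₂.isAncestor_iff hs₁ (Finset.mem_sdiff.mp hb).1] using h₁.normal a ha b hb hab
    · exact absurd (h₁.adj_mem a ha b hab) (Finset.mem_sdiff.mp hb).2
    · exact absurd (h₁.adj_mem b hb a hab.symm) (Finset.mem_sdiff.mp ha).2
    · exact h₂.normal a ha b hb hab
  · intro b hb c hc hbc hcb hadj
    rcases hsplit c hc with hc | hc <;> rcases hsplit b hb with hb | hb
    · rw [h₂.parent_eq c (Finset.mem_sdiff.mp hc).1] at hadj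
      exact h₁.greedy b hb c hc hbc
        ((h₂.isAncestor_iff hs₁ (Finset.mem_sdiff.mp hb).1).mp hcb) hadj
    · have := hcb.mem_of_mapsTo hphase₂ (hphase₂ (Finset.mem_union_left _ hb))
      rcases Finset.mem_union.mp this with hc' | hc'
      · exact absurd (Finset.mem_sdiff.mp hc).1 (Finset.mem_sdiff.mp hc').2
      · exact absurd hc' (Finset.mem_sdiff.mp hc).2
    · have hold := h₂.mapsTo_old hs₁
      exact absurd (hcb.mem_of_mapsTo hold (hold (Finset.mem_sdiff.mp hb).1))
        (Finset.mem_sdiff.mp hc).2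
    · exact h₂.greedy b hb c hc hbc hcb hadj

end DfsSpec

variable {G : SimpleGraph (Fin (n+1))}

theorem card_compl_insert_lt {S : Finset (Fin (n+1))} {j : Fin (n+1)} {fuel : ℕ}
    (hfuel : Sᶜ.card ≤ fuel) (hj : j ∉ S) : (insert j S)ᶜ.card < fuel := by
  rw [Finset.compl_insert]
  exact (Finset.card_erase_lt_of_mem (Finset.mem_compl.mpr hj)).trans_le hfuel

theorem dfsSpec_foldl {fuel : ℕ}
    (ih : ∀ j (t : DfsState n), j ∈ t.1 → MapsTo t.2 t.1 t.1 → t.1ᶜ.card < fuel →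
      DfsSpec G j t (dfsStep G fuel j t) ∧ ∀ b, G.Adj j b → b ∈ (dfsStep G fuel j t).1)
    {i : Fin (n+1)} {l : List (Fin (n+1))} (hl : l.Pairwise (· > ·)) (hil : ∀ j ∈ l, G.Adj i j)
    {s : DfsState n} (hi : i ∈ s.1) (hs : MapsTo s.2 s.1 s.1) (hfuel : s.1ᶜ.card ≤ fuel)
    (hpre : ∀ b, G.Adj i b → b ∉ l → b ∈ s.1) :
    DfsSpec G i s (l.foldl (dfsVisit G fuel i) s) ∧
      ∀ b, G.Adj i b → b ∈ (l.foldl (dfsVisit G fuel i) s).1 := by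
  induction l generalizing s with
  | nil => exact ⟨DfsSpec.refl G i s, fun b hb => hpre b hb List.not_mem_nil⟩
  | cons j l ihl =>
    rw [List.pairwise_cons] at hl
    have hil' : ∀ j ∈ l, G.Adj i j := fun k hk => hil k (List.mem_cons_of_mem j hk)
    rw [List.foldl_cons, dfsVisit]
    by_cases hj : j ∈ s.1
    · rw [if_pos hj]
      refine ihl hl.2 hil' hi hs hfuel fun b hb hbl => ?_
      by_cases hbj : b = j
      · exact hbj ▸ hj
      · exact hpre b hb (by simp [hbj, hbl])
    · rw [if_neg hj]
      obtain ⟨h₁, hj₁⟩ := ih j (insert j s.1, Function.update s.2 j i) (mem_insert_self j s.1)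
        (mapsTo_update_insert hi hs j) (card_compl_insert_lt hfuel hj)
      have hlarger : ∀ b, G.Adj i b → j < b → b ∈ s.1 := fun b hb hjb =>
        hpre b hb fun hbl => (List.mem_cons.mp hbl).elim (fun h => hjb.ne' h)
          fun h => (hl.1 b h).not_gt hjb
      have hdesc := DfsSpec.descend hi hs hj (hil j List.mem_cons_self) hlarger h₁ hj₁
      obtain ⟨h₂, hadj₂⟩ := ihl hl.2 hil' (hdesc.subset hi) (hdesc.mapsTo hs)
        ((Finset.card_le_card (Finset.compl_subset_compl.mpr hdesc.subset)).trans hfuel)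
        fun b hb hbl => by
          by_cases hbj : b = j
          · exact hbj ▸ h₁.subset (mem_insert_self j s.1)
          · exact hdesc.subset (hpre b hb (by simp [hbj, hbl]))
      exact ⟨hdesc.trans h₂ hs, hadj₂⟩

theorem dfsSpec_dfsStep (fuel : ℕ) : ∀ (i : Fin (n+1)) (s : DfsState n), i ∈ s.1 →
    MapsTo s.2 s.1 s.1 → s.1ᶜ.card < fuel →
      DfsSpec G i s (dfsStep G fuel i s) ∧ ∀ b, G.Adj i b → b ∈ (dfsStep G fuel i s).1 := by
  induction fuel with
  | zero => exact fun _ _ _ _ hfuel => absurd hfuel (Nat.not_lt_zero _)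
  | succ fuel ih =>
    intro i s hi hs hfuel
    rw [dfsStep_succ]
    exact dfsSpec_foldl ih (nbrs_pairwise_gt G i) (fun j hj => mem_nbrs.mp hj) hi hs
      (Nat.lt_succ_iff.mp hfuel) fun b hb hbl => absurd (mem_nbrs.mpr hb) hbl

theorem dfsSpec_root (G : SimpleGraph (Fin (n+1))) (r : Fin (n+1)) :
    DfsSpec G r ({r}, fun _ => r) (dfsStep G (n+1) r ({r}, fun _ => r)) ∧
      ∀ b, G.Adj r b → b ∈ (dfsStep G (n+1) r ({r}, fun _ => r)).1 :=
  dfsSpec_dfsStep (n+1) r _ (mem_singleton_self r) (fun _ _ => mem_singleton_self r)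
    (by simp [Finset.card_compl])

theorem mem_dfsStep_of_connected (hG : G.Connected) (r v : Fin (n+1)) :
    v ∈ (dfsStep G (n+1) r ({r}, fun _ => r)).1 := by
  obtain ⟨h, hr⟩ := dfsSpec_root G r
  have hclosed : ∀ u ∈ (dfsStep G (n+1) r ({r}, fun _ => r)).1, ∀ b, G.Adj u b →
      b ∈ (dfsStep G (n+1) r ({r}, fun _ => r)).1 := by
    intro u hu b hub
    by_cases hur : u = r
    · exact hr b (hur ▸ hub)
    · exact h.adj_mem u (Finset.mem_sdiff.mpr ⟨hu, by simpa using hur⟩) b hub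
  induction (SimpleGraph.reachable_iff_reflTransGen r v).mp (hG.preconnected r v) with
  | refl => exact h.subset (mem_singleton_self r)
  | tail _ hbc ih => exact hclosed _ ih _ hbc

theorem mem_sdiff_dfsStep (hG : G.Connected) {r v : Fin (n+1)} (hv : v ≠ r) :
    v ∈ (dfsStep G (n+1) r ({r}, fun _ => r)).1 \ {r} :=
  Finset.mem_sdiff.mpr ⟨mem_dfsStep_of_connected hG r v, by simpa using hv⟩

noncomputable def dfsTree (hG : G.Connected) (r : Fin (n+1)) : RootedSpanningTree G r where
  parent := dfsParent G r
  parent_root := (dfsSpec_root G r).1.parent_eq r (mem_singleton_self r)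
  adj_parent v hv := (dfsSpec_root G r).1.adj_parent v (mem_sdiff_dfsStep hG hv)
  reaches_root v := by
    by_cases hv : v = r
    · exact ⟨0, hv⟩
    · obtain ⟨k, -, hk⟩ := (dfsSpec_root G r).1.isAncestor v (mem_sdiff_dfsStep hG hv)
      exact ⟨k, hk⟩

theorem isNormal_dfsParent (hG : G.Connected) (r : Fin (n+1)) : IsNormal G (dfsParent G r) := by
  have h := (dfsSpec_root G r).1
  intro a b hab
  by_cases ha : a = r
  · subst ha
    exact Or.inl (h.isAncestor b (mem_sdiff_dfsStep hG hab.ne.symm))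
  by_cases hb : b = r
  · subst hb
    exact Or.inr (h.isAncestor a (mem_sdiff_dfsStep hG ha))
  exact h.normal a (mem_sdiff_dfsStep hG ha) b (mem_sdiff_dfsStep hG hb) hab

theorem isGreedy_dfsParent (hG : G.Connected) (r : Fin (n+1)) :
    IsGreedy G r (dfsParent G r) := by
  intro b c hc hcb hadj
  have hb := (dfsTree hG r).ne_root_of_isAncestor hcb hc
  exact (dfsSpec_root G r).1.greedy b (mem_sdiff_dfsStep hG hb) c (mem_sdiff_dfsStep hG hc)
    ((dfsTree hG r).ne_of_isAncestor hcb hc).symm hcb hadj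

end PFG

/-- The number of κ-inversions of the DFS tree of a connected graph `G` equals
the circuit rank `g = |E| - |V| + 1` (stated additively: `κ + |V| = |E| + 1`). -/
theorem kappa_dfs_eq_circuit_rank {n : ℕ}
    (G : SimpleGraph (Fin (n+1))) (hG : G.Connected) (r : Fin (n+1)) :
    PFG.kappaNum G r (PFG.dfsParent G r) + (n + 1) = G.edgeSet.ncard + 1 := by
  have h : PFG.kappaNum G r (PFG.dfsParent G r) + n = G.edgeSet.ncard :=
    (PFG.dfsTree hG r).kappaNum_add_eq_ncard_edgeSet (PFG.isNormal_dfsParent hG r)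
      (PFG.isGreedy_dfsParent hG r)
  omega
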